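/- arXiv:1608.02595 — 5 statements merged into one kernel-verified Lean document; each statement's English description precedes it below -/
import Mathlib

section
/- Let p be an odd prime. Then the set Σ₃(p) of Lagrangian stochastic subspaces of V₆ has exactly 2p+2 elements. Explicitly, Σ₃(p) consists precisely of the following pairwise distinct subspaces: T_{⋆,even} = span{((1,1,1),(1,1,1)), ((1,0,0),(1,0,0)), ((0,1,0),(0,1,0))}; T_{m,even} = span{((1,1,1),(1,1,1)), ((−1,m,1),(1,m,−1)), ((m,1,−1),(m,−1,1))} for each m ∈ ZMod p; T_{⋆,odd} = span{((1,1,1),(1,1,1)), ((−1,0,1),(1,0,−1)), ((0,1,0),(0,1,0))}; and T_{m,odd} = span{((1,1,1),(1,1,1)), ((1,m,0),(1,m,0)), ((−m,1,m−1),(m,−1,1−m))} for each m ∈ ZMod p. -/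
/-- The 6-dimensional phase space `V₆ = (Fin 3 → ZMod p) × (Fin 3 → ZMod p)`. -/
abbrev V6 (p : ℕ) := (Fin 3 → ZMod p) × (Fin 3 → ZMod p)

/-- Dot product on `Fin 3 → ZMod p`. -/
def dotP {p : ℕ} (x y : Fin 3 → ZMod p) : ZMod p := ∑ i, x i * y i

/-- The bilinear form `β((x⃗,y⃗),(x⃗',y⃗')) = x⃗·x⃗' − y⃗·y⃗'`. -/
def betaF {p : ℕ} (v w : V6 p) : ZMod p := dotP v.1 w.1 - dotP v.2 w.2

/-- The all-ones vector `𝟙₆`. -/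
def onesV (p : ℕ) : V6 p := (fun _ => 1, fun _ => 1)

/-- `Σ₃(p)`: the set of Lagrangian stochastic subspaces of `V₆`. -/
def Sigma3 (p : ℕ) : Set (Submodule (ZMod p) (V6 p)) :=
  {T | Module.finrank (ZMod p) T = 3 ∧ (∀ v ∈ T, ∀ w ∈ T, betaF v w = 0) ∧ onesV p ∈ T}

/-- The explicit family of `2p+2` subspaces: `(false, none) ↦ T_{⋆,even}`,
`(false, some m) ↦ T_{m,even}`, `(true, none) ↦ T_{⋆,odd}`, `(true, some m) ↦ T_{m,odd}`. -/
def Texp (p : ℕ) : Bool × Option (ZMod p) → Submodule (ZMod p) (V6 p)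
  | (false, none) => Submodule.span (ZMod p)
      {(![1,1,1], ![1,1,1]), (![1,0,0], ![1,0,0]), (![0,1,0], ![0,1,0])}
  | (false, some m) => Submodule.span (ZMod p)
      {(![1,1,1], ![1,1,1]), (![-1,m,1], ![1,m,-1]), (![m,1,-1], ![m,-1,1])}
  | (true, none) => Submodule.span (ZMod p)
      {(![1,1,1], ![1,1,1]), (![-1,0,1], ![1,0,-1]), (![0,1,0], ![0,1,0])}
  | (true, some m) => Submodule.span (ZMod p)
      {(![1,1,1], ![1,1,1]), (![1,m,0], ![1,m,0]), (![-m,1,m-1], ![m,-1,1-m])}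


/-!
Write `v = (x, y)` and `δv = x - y`. Then `2 β(v, w) = (x + y)·δw + δv·(x' + y')`,
`β(v, v) = (x + y)·δv` and `β(v, 𝟙₆) = Σᵢ (δv)ᵢ`, so for `T ∈ Σ₃(p)` the image `δ(T)` lies in
the plane `Σᵢ cᵢ = 0`. If `δ(T)` is spanned by a single `c = δv` with `v ∈ T`, isotropy gives
`c·(x + y) = 0` on all of `T`, which puts `T_{⋆,even}` (`c = 0`), `T_{⋆,odd}` (`c ∥ (1,0,-1)`) or
`T_{m,odd}` (`c ∥ (-m,1,m-1)`) inside `T`. Otherwise `δ(T)` is the whole plane, so `δa = (1,0,-1)`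
and `δb = (0,1,-1)` for some `a, b ∈ T`, and isotropy against `a` and `b` puts `T_{m,even}` inside
`T` with `m = (1,0,-1)·(b.1 + b.2)`. A Lagrangian subspace of the nondegenerate form `β` is its own
orthogonal, so generators orthogonal to `T` lie in `T`, and the inclusions are equalities by
dimension. Two different members of the family contain a pair of non-orthogonal generators.
-/

namespace LinearMap.BilinForm

variable {K V : Type*} [Field K] [AddCommGroup V] [Module K V] {B : LinearMap.BilinForm K V}

lemma apply_eq_zero_of_mem_span {s : Set V} (h : ∀ a ∈ s, ∀ b ∈ s, B a b = 0)
    {v w : V} (hv : v ∈ Submodule.span K s) (hw : w ∈ Submodule.span K s) : B v w = 0 := by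
  have hrow (a) (ha : a ∈ s) : Submodule.span K s ≤ LinearMap.ker (B a) :=
    Submodule.span_le.2 (h a ha)
  have hcol : Submodule.span K s ≤ LinearMap.ker (B.flip w) :=
    Submodule.span_le.2 fun a ha => hrow a ha hw
  exact hcol hv

lemma mem_of_forall_apply_eq_zero [FiniteDimensional K V] (hB : B.Nondegenerate)
    {W : Submodule K V} (hW : ∀ v ∈ W, ∀ w ∈ W, B v w = 0)
    (hdim : 2 * Module.finrank K W = Module.finrank K V) {v : V} (hv : ∀ w ∈ W, B w v = 0) :
    v ∈ W := by
  have hle : W ≤ B.orthogonal W := fun x hx => B.mem_orthogonal_iff.2 fun n hn => hW n hn x hx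
  have heq : W = B.orthogonal W :=
    Submodule.eq_of_le_of_finrank_le hle (by rw [finrank_orthogonal hB]; omega)
  rw [heq, mem_orthogonal_iff]
  exact hv

end LinearMap.BilinForm

lemma finrank_span_triple {K V : Type*} [DivisionRing K] [AddCommGroup V] [Module K V]
    {a b c : V} (h : ∀ r s t : K, r • a + s • b + t • c = 0 → r = 0 ∧ s = 0 ∧ t = 0) :
    Module.finrank K (Submodule.span K {a, b, c}) = 3 := by
  have hli : LinearIndependent K ![a, b, c] := by
    refine Fintype.linearIndependent_iff.2 fun g hg => ?_
    simp only [Fin.sum_univ_three, Matrix.cons_val_zero, Matrix.cons_val_one,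
      Matrix.cons_val_two, Matrix.head_cons, Matrix.tail_cons] at hg
    obtain ⟨h0, h1, h2⟩ := h _ _ _ hg
    intro i
    fin_cases i <;> assumption
  have hrange : Set.range ![a, b, c] = {a, b, c} := by
    simp only [Matrix.range_cons, Matrix.range_empty, Set.union_empty, Set.singleton_union]
  rw [← hrange, finrank_span_eq_card hli, Fintype.card_fin]

lemma mem_span_of_sum_eq_zero {R : Type*} [CommRing R] {c : Fin 3 → R} (h : ∑ i, c i = 0) :
    c ∈ Submodule.span R (Set.range ![![1, 0, -1], ![0, 1, -1]]) := by
  rw [Submodule.mem_span_range_iff_exists_fun]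
  refine ⟨![c 0, c 1], funext fun i => ?_⟩
  rw [Fin.sum_univ_three] at h
  fin_cases i <;>
    simp only [Fin.zero_eta, Fin.mk_one, Fin.reduceFinMk, Finset.sum_apply, Fin.sum_univ_two,
      Pi.smul_apply, smul_eq_mul, Matrix.cons_val]
  · ring
  · ring
  · linear_combination -h

lemma two_ne_zero_of_ne_two {p : ℕ} [Fact p.Prime] (hodd : p ≠ 2) : (2 : ZMod p) ≠ 0 :=
  Ring.two_ne_zero (by rwa [ZMod.ringChar_zmod_n])

variable {p : ℕ}

lemma betaF_def (v w : V6 p) : betaF v w = v.1 ⬝ᵥ w.1 - v.2 ⬝ᵥ w.2 := rfl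

def betaForm (p : ℕ) : LinearMap.BilinForm (ZMod p) (V6 p) :=
  LinearMap.mk₂ (ZMod p) betaF
    (fun u v w => by
      simp only [betaF_def, Prod.fst_add, Prod.snd_add, add_dotProduct]
      ring)
    (fun c v w => by
      simp only [betaF_def, Prod.smul_fst, Prod.smul_snd, smul_dotProduct,
        smul_eq_mul, mul_sub])
    (fun u v w => by
      simp only [betaF_def, Prod.fst_add, Prod.snd_add, dotProduct_add]
      ring)
    (fun c v w => by
      simp only [betaF_def, Prod.smul_fst, Prod.smul_snd, dotProduct_smul,
        smul_eq_mul, mul_sub])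

@[simp] lemma betaForm_apply (v w : V6 p) : betaForm p v w = betaF v w := rfl

lemma betaForm_nondegenerate [Fact p.Prime] : (betaForm p).Nondegenerate := by
  refine .ofSeparatingLeft fun v hv => ?_
  ext i
  · simpa [betaF_def] using hv (Pi.single i 1, 0)
  · simpa [betaF_def] using hv (0, Pi.single i 1)

lemma finrank_V6 [Fact p.Prime] : Module.finrank (ZMod p) (V6 p) = 6 := by
  rw [Module.finrank_prod, Module.finrank_fin_fun]

lemma two_mul_betaF (v w : V6 p) :
    2 * betaF v w = (v.1 + v.2) ⬝ᵥ (w.1 - w.2) + (v.1 - v.2) ⬝ᵥ (w.1 + w.2) := by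
  simp only [betaF_def, add_dotProduct, sub_dotProduct, dotProduct_add,
    dotProduct_sub]
  ring

lemma betaF_self (v : V6 p) : betaF v v = (v.1 + v.2) ⬝ᵥ (v.1 - v.2) := by
  simp only [betaF_def, add_dotProduct, dotProduct_sub, dotProduct_comm v.2 v.1]
  ring

lemma betaF_onesV (v : V6 p) : betaF v (onesV p) = ∑ i, (v.1 - v.2) i := by
  simp [betaF, dotP, onesV, Finset.sum_sub_distrib]

lemma onesV_eq : onesV p = (![1, 1, 1], ![1, 1, 1]) := by
  ext i <;> fin_cases i <;> rfl

def diffMap (p : ℕ) : V6 p →ₗ[ZMod p] Fin 3 → ZMod p :=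
  LinearMap.fst _ _ _ - LinearMap.snd _ _ _

@[simp] lemma diffMap_apply (v : V6 p) : diffMap p v = v.1 - v.2 := rfl

section Sigma3

variable {T : Submodule (ZMod p) (V6 p)} (hT : T ∈ Sigma3 p)
include hT

lemma mem_of_forall_betaF_eq_zero [Fact p.Prime] {v : V6 p} (hv : ∀ w ∈ T, betaF w v = 0) :
    v ∈ T :=
  LinearMap.BilinForm.mem_of_forall_apply_eq_zero betaForm_nondegenerate hT.2.1
    (by rw [hT.1, finrank_V6]) hv

lemma sum_sub_eq_zero {v : V6 p} (hv : v ∈ T) : ∑ i, (v.1 - v.2) i = 0 :=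
  betaF_onesV v ▸ hT.2.1 v hv _ hT.2.2

lemma sub_dotProduct_add_eq_zero {v w : V6 p} (hv : v ∈ T) (hw : w ∈ T) {c : ZMod p}
    (hc : w.1 - w.2 = c • (v.1 - v.2)) : (v.1 - v.2) ⬝ᵥ (w.1 + w.2) = 0 := by
  have hvv : (v.1 + v.2) ⬝ᵥ (v.1 - v.2) = 0 := betaF_self v ▸ hT.2.1 v hv v hv
  have hvw := two_mul_betaF v w
  rw [hT.2.1 v hv w hw, hc, dotProduct_smul, hvv, smul_zero, mul_zero, zero_add] at hvw
  exact hvw.symm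

end Sigma3

lemma finrank_Texp [Fact p.Prime] (hodd : p ≠ 2) (i : Bool × Option (ZMod p)) :
    Module.finrank (ZMod p) (Texp p i) = 3 := by
  have h2 := two_ne_zero_of_ne_two hodd
  rcases i with ⟨_ | _, _ | m⟩ <;> refine finrank_span_triple fun r s t h => ?_ <;>
    simp only [Prod.smul_mk, Prod.mk_add_mk, Prod.mk_eq_zero, Matrix.smul_cons, Matrix.smul_empty,
      Matrix.add_cons, Matrix.empty_add_empty, Matrix.head_cons, Matrix.tail_cons, smul_eq_mul,
      Matrix.cons_eq_zero_iff, Matrix.zero_empty, and_true] at h <;>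
    grind

lemma Texp_mem_Sigma3 [Fact p.Prime] (hodd : p ≠ 2) (i : Bool × Option (ZMod p)) :
    Texp p i ∈ Sigma3 p := by
  refine ⟨finrank_Texp hodd i, fun v hv w hw => ?_, ?_⟩
  · rcases i with ⟨_ | _, _ | m⟩ <;>
      refine LinearMap.BilinForm.apply_eq_zero_of_mem_span (B := betaForm p) ?_ hv hw <;>
      rintro a (rfl | rfl | rfl) b (rfl | rfl | rfl) <;>
      simp only [betaForm_apply, betaF_def, Matrix.vec3_dotProduct, Matrix.cons_val] <;> ring
  · rw [onesV_eq]
    rcases i with ⟨_ | _, _ | m⟩ <;> exact Submodule.subset_span (Set.mem_insert _ _)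

lemma betaF_eq_zero_of_span_eq {a b c a' b' c' : V6 p}
    (h : Submodule.span (ZMod p) {a, b, c} = Submodule.span (ZMod p) {a', b', c'})
    (hT : Submodule.span (ZMod p) {a', b', c'} ∈ Sigma3 p) :
    betaF b b' = 0 ∧ betaF b c' = 0 ∧ betaF c b' = 0 ∧ betaF c c' = 0 := by
  have hmem {x y : V6 p} (hx : x ∈ ({a, b, c} : Set (V6 p)))
      (hy : y ∈ ({a', b', c'} : Set (V6 p))) : betaF x y = 0 :=
    hT.2.1 x (h ▸ Submodule.subset_span hx) y (Submodule.subset_span hy)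
  exact ⟨hmem (by simp) (by simp), hmem (by simp) (by simp), hmem (by simp) (by simp),
    hmem (by simp) (by simp)⟩

lemma Texp_injective [Fact p.Prime] (hodd : p ≠ 2) : Function.Injective (Texp p) := by
  have h2 := two_ne_zero_of_ne_two hodd
  intro i j h
  have hj := Texp_mem_Sigma3 hodd j
  rcases i with ⟨_ | _, _ | m⟩ <;> rcases j with ⟨_ | _, _ | m'⟩ <;>
    obtain ⟨h₁, h₂, h₃, h₄⟩ := betaF_eq_zero_of_span_eq h hj <;>
    simp only [betaF_def, Matrix.vec3_dotProduct, Matrix.cons_val, Prod.mk.injEq,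
      Option.some.injEq] at h₁ h₂ h₃ h₄ ⊢ <;>
    grind

lemma Texp_eq_of_mem [Fact p.Prime] (hodd : p ≠ 2) {T : Submodule (ZMod p) (V6 p)}
    (hT : T ∈ Sigma3 p) {i : Bool × Option (ZMod p)} {g h : V6 p}
    (hi : Texp p i = Submodule.span (ZMod p) {(![1, 1, 1], ![1, 1, 1]), g, h})
    (hg : g ∈ T) (hh : h ∈ T) : Texp p i = T := by
  refine Submodule.eq_of_le_of_finrank_le ?_ (by rw [hT.1, finrank_Texp hodd])
  rw [hi, Submodule.span_le, Set.insert_subset_iff, Set.insert_subset_iff,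
    Set.singleton_subset_iff, ← onesV_eq]
  exact ⟨hT.2.2, hg, hh⟩

section Classification

variable [Fact p.Prime] (hodd : p ≠ 2) {T : Submodule (ZMod p) (V6 p)} (hT : T ∈ Sigma3 p)
include hodd hT

lemma exists_Texp_eq_of_forall_sub_eq_smul {d : Fin 3 → ZMod p} (hd : d ∈ T.map (diffMap p))
    (h : ∀ w ∈ T, ∃ c : ZMod p, w.1 - w.2 = c • d) : ∃ i, Texp p i = T := by
  obtain ⟨v, hv, rfl⟩ := hd
  simp only [diffMap_apply] at h
  have hsum : (v.1 - v.2) 0 + (v.1 - v.2) 1 + (v.1 - v.2) 2 = 0 := by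
    simpa only [Fin.sum_univ_three] using sum_sub_eq_zero hT hv
  have hperp (w) (hw : w ∈ T) : (v.1 - v.2) ⬝ᵥ (w.1 + w.2) = 0 :=
    (h w hw).elim fun _ hc => sub_dotProduct_add_eq_zero hT hv hw hc
  generalize v.1 - v.2 = d at h hsum hperp
  have hdiff (w) (hw : w ∈ T) : ∃ c : ZMod p, ∀ i, w.1 i - w.2 i = c * d i :=
    (h w hw).elim fun c hc => ⟨c, fun i => congrFun hc i⟩
  simp only [dotProduct, Fin.sum_univ_three, Pi.add_apply] at hperp
  by_cases hd1 : d 1 = 0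
  · by_cases hd0 : d 0 = 0
    · refine ⟨(false, none), Texp_eq_of_mem hodd hT rfl ?_ ?_⟩ <;>
        refine mem_of_forall_betaF_eq_zero hT fun w hw => ?_ <;>
        obtain ⟨c, hc⟩ := hdiff w hw <;>
        simp only [betaF_def, Matrix.vec3_dotProduct, Matrix.cons_val]
      · linear_combination hc 0 + c * hd0
      · linear_combination hc 1 + c * hd1
    · refine ⟨(true, none), Texp_eq_of_mem hodd hT rfl ?_ ?_⟩ <;>
        refine mem_of_forall_betaF_eq_zero hT fun w hw => ?_ <;>
        simp only [betaF_def, Matrix.vec3_dotProduct, Matrix.cons_val]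
      · refine (mul_right_inj' hd0).1 ?_
        linear_combination -hperp w hw + (w.1 2 + w.2 2) * hsum
          + (w.1 1 + w.2 1 - (w.1 2 + w.2 2)) * hd1
      · obtain ⟨c, hc⟩ := hdiff w hw
        linear_combination hc 1 + c * hd1
  · have hm : -d 0 / d 1 * d 1 = -d 0 := div_mul_cancel₀ _ hd1
    refine ⟨(true, some (-d 0 / d 1)), Texp_eq_of_mem hodd hT rfl ?_ ?_⟩ <;>
      refine mem_of_forall_betaF_eq_zero hT fun w hw => ?_ <;>
      simp only [betaF_def, Matrix.vec3_dotProduct, Matrix.cons_val]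
    · obtain ⟨c, hc⟩ := hdiff w hw
      linear_combination hc 0 + (-d 0 / d 1) * hc 1 + c * hm
    · refine (mul_right_inj' hd1).1 ?_
      linear_combination hperp w hw - (w.1 2 + w.2 2) * hsum
        + (w.1 2 + w.2 2 - (w.1 0 + w.2 0)) * hm

lemma Texp_eq_of_sub_eq {a b : V6 p} (ha : a ∈ T) (hb : b ∈ T)
    (hda : a.1 - a.2 = ![1, 0, -1]) (hdb : b.1 - b.2 = ![0, 1, -1]) :
    Texp p (false, some (![1, 0, -1] ⬝ᵥ (b.1 + b.2))) = T := by
  have horth {v w} (hv : v ∈ T) (hw : w ∈ T) :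
      (v.1 + v.2) ⬝ᵥ (w.1 - w.2) + (v.1 - v.2) ⬝ᵥ (w.1 + w.2) = 0 := by
    rw [← two_mul_betaF, hT.2.1 v hv w hw, mul_zero]
  have haa : (a.1 + a.2) ⬝ᵥ ![1, 0, -1] = 0 := hda ▸ betaF_self a ▸ hT.2.1 a ha a ha
  have hbb : (b.1 + b.2) ⬝ᵥ ![0, 1, -1] = 0 := hdb ▸ betaF_self b ▸ hT.2.1 b hb b hb
  have hab := horth ha hb
  rw [hda, hdb] at hab
  simp only [Matrix.vec3_dotProduct, Pi.add_apply, Matrix.cons_val] at haa hbb hab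
  have he (w) (hw : w ∈ T) :
      ![1, 0, -1] ⬝ᵥ (w.1 + w.2) = ![1, 0, -1] ⬝ᵥ (b.1 + b.2) * (w.1 1 - w.2 1) := by
    have haw := horth ha hw
    have hsum := sum_sub_eq_zero hT hw
    rw [hda] at haw
    simp only [Matrix.vec3_dotProduct, Fin.sum_univ_three, Pi.add_apply, Pi.sub_apply,
      Matrix.cons_val] at haw hsum ⊢
    linear_combination haw - (w.1 0 - w.2 0) * haa - (w.1 1 - w.2 1) * hab
      - (a.1 2 + a.2 2) * hsum
  have hf (w) (hw : w ∈ T) :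
      ![0, 1, -1] ⬝ᵥ (w.1 + w.2) = -(![1, 0, -1] ⬝ᵥ (b.1 + b.2) * (w.1 0 - w.2 0)) := by
    have hbw := horth hb hw
    have hsum := sum_sub_eq_zero hT hw
    rw [hdb] at hbw
    simp only [Matrix.vec3_dotProduct, Fin.sum_univ_three, Pi.add_apply, Pi.sub_apply,
      Matrix.cons_val] at hbw hsum ⊢
    linear_combination hbw - (w.1 1 - w.2 1) * hbb - (b.1 2 + b.2 2) * hsum
  refine Texp_eq_of_mem hodd hT rfl ?_ ?_ <;>
    refine mem_of_forall_betaF_eq_zero hT fun w hw => ?_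
  · have := he w hw
    simp only [betaF_def, Matrix.vec3_dotProduct, Pi.add_apply, Matrix.cons_val] at this ⊢
    linear_combination -this
  · have := hf w hw
    simp only [betaF_def, Matrix.vec3_dotProduct, Pi.add_apply, Matrix.cons_val] at this ⊢
    linear_combination this

lemma exists_Texp_eq : ∃ i, Texp p i = T := by
  set D := T.map (diffMap p)
  have hDle : D ≤ Submodule.span (ZMod p) (Set.range ![![1, 0, -1], ![0, 1, -1]]) := by
    rintro _ ⟨v, hv, rfl⟩
    exact mem_span_of_sum_eq_zero (sum_sub_eq_zero hT hv)
  rcases le_or_gt (Module.finrank (ZMod p) D) 1 with hD | hD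
  · obtain ⟨⟨d, hd⟩, hgen⟩ := finrank_le_one_iff.1 hD
    refine exists_Texp_eq_of_forall_sub_eq_smul hodd hT hd fun w hw => ?_
    obtain ⟨c, hc⟩ := hgen ⟨diffMap p w, Submodule.mem_map_of_mem hw⟩
    exact ⟨c, (congrArg Subtype.val hc).symm⟩
  · have hDeq := Submodule.eq_of_le_of_finrank_le hDle
      ((finrank_range_le_card _).trans (by rw [Fintype.card_fin]; exact hD))
    obtain ⟨a, ha, hda⟩ : ![1, 0, -1] ∈ D := hDeq ▸ Submodule.subset_span ⟨0, rfl⟩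
    obtain ⟨b, hb, hdb⟩ : ![0, 1, -1] ∈ D := hDeq ▸ Submodule.subset_span ⟨1, rfl⟩
    exact ⟨_, Texp_eq_of_sub_eq hodd hT ha hb hda hdb⟩

end Classification

/-- For `p` an odd prime, `Σ₃(p)` consists precisely of the `2p+2` pairwise distinct
subspaces `T_{⋆,even}`, `T_{m,even}` (m ∈ ZMod p), `T_{⋆,odd}`, `T_{m,odd}` (m ∈ ZMod p). -/
theorem sigma3_eq_explicit (p : ℕ) [Fact p.Prime] (hodd : p ≠ 2) :
    Function.Injective (Texp p) ∧ Set.range (Texp p) = Sigma3 p ∧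
      (Sigma3 p).ncard = 2 * p + 2 := by
  have hrange : Set.range (Texp p) = Sigma3 p :=
    (Set.range_subset_iff.2 (Texp_mem_Sigma3 hodd)).antisymm fun _ hT => exists_Texp_eq hodd hT
  refine ⟨Texp_injective hodd, hrange, ?_⟩
  have : NeZero p := ⟨(Fact.out : p.Prime).ne_zero⟩
  rw [← hrange, Set.ncard_range_of_injective (Texp_injective hodd), Nat.card_eq_fintype_card,
    Fintype.card_prod, Fintype.card_bool, Fintype.card_option, ZMod.card]
  ring
end

section
/- Let p be a prime, N ≥ 1, and T, T' ∈ Σ₃(p). Then trace(R_N(T) · R_N(T')†) = p^(N · dim(T ∩ T')) as complex numbers, where dim(T ∩ T') is the dimension of T ∩ T' as a subspace over ZMod p. -/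
open Classical in
/-- The matrix `R_N(T)`, the `N`-fold Kronecker power of the 0/1 matrix `r(T)`:
`R_N(T)_{x,y} = ∏_{k < N} [ (x k, y k) ∈ T ]`. -/
noncomputable def RN (p N : ℕ) (T : Submodule (ZMod p) (V6 p)) :
    Matrix (Fin N → Fin 3 → ZMod p) (Fin N → Fin 3 → ZMod p) ℂ :=
  fun x y => ∏ k : Fin N, if ((x k, y k) : V6 p) ∈ T then 1 else 0

/-! Since `R_N(T)` has real entries, `trace (R_N(T) R_N(T')ᴴ)` is the sum of the entries of the
Hadamard product `R_N(T) ⊙ R_N(T') = R_N(T ⊓ T')`. As a Kronecker power, `R_N(W)` has entry sum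
`|W| ^ N = p ^ (N · dim W)`. -/

theorem Fintype.sum_sum_prod_eq_pow {α β R : Type*} [Fintype α] [Fintype β] [CommSemiring R]
    (N : ℕ) (f : α → β → R) :
    ∑ x : Fin N → α, ∑ y : Fin N → β, ∏ k, f (x k) (y k) = (∑ a, ∑ b, f a b) ^ N := by
  rw [Fintype.sum_pow]
  exact Fintype.sum_congr _ _ fun x => (Fintype.prod_sum fun k b => f (x k) b).symm

theorem Submodule.sum_indicator_eq_pow_finrank {K V R : Type*} [Field K] [Fintype K]
    [AddCommGroup V] [Module K V] [Fintype V] [Semiring R] (W : Submodule K V)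
    [DecidablePred (· ∈ W)] :
    ∑ v : V, (if v ∈ W then (1 : R) else 0) = (Fintype.card K : R) ^ Module.finrank K W := by
  rw [Finset.sum_boole, ← Fintype.card_subtype, ← Nat.cast_pow, Module.card_eq_pow_finrank (K := K)]

section RN

open Matrix

variable {p N : ℕ}

theorem conjTranspose_RN (T : Submodule (ZMod p) (V6 p)) : (RN p N T)ᴴ = (RN p N T)ᵀ := by
  ext x y
  simp [RN, conjTranspose_apply, star_prod]

theorem RN_hadamard_RN (T T' : Submodule (ZMod p) (V6 p)) :
    RN p N T ⊙ RN p N T' = RN p N (T ⊓ T') := by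
  ext x y
  simp only [hadamard_apply, RN, ← Finset.prod_mul_distrib, ite_zero_mul_ite_zero, mul_one]
  congr! 2

theorem sum_sum_RN [Fact p.Prime] (T : Submodule (ZMod p) (V6 p)) :
    ∑ x, ∑ y, RN p N T x y = (p : ℂ) ^ (N * Module.finrank (ZMod p) T) := by
  classical
  refine (Fintype.sum_sum_prod_eq_pow N fun a b => if (a, b) ∈ T then (1 : ℂ) else 0).trans ?_
  rw [← Fintype.sum_prod_type', Submodule.sum_indicator_eq_pow_finrank, ZMod.card, pow_mul']

end RN

open Matrix in
theorem trace_RN_mul_RN_conjTranspose_general (p N : ℕ) [Fact p.Prime]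
    (T T' : Submodule (ZMod p) (V6 p)) :
    Matrix.trace (RN p N T * (RN p N T')ᴴ) =
      (p : ℂ) ^ (N * Module.finrank (ZMod p) ↥(T ⊓ T')) := by
  rw [conjTranspose_RN, ← sum_hadamard_eq, RN_hadamard_RN, sum_sum_RN]

open Matrix in
/-- `trace (R_N(T) R_N(T')†) = p^(N · dim (T ∩ T'))`. -/
theorem trace_RN_mul_RN_conjTranspose (p N : ℕ) [Fact p.Prime] (hN : 1 ≤ N)
    (T T' : Submodule (ZMod p) (V6 p)) (hT : T ∈ Sigma3 p) (hT' : T' ∈ Sigma3 p) :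
    Matrix.trace (RN p N T * (RN p N T')ᴴ) =
      (p : ℂ) ^ (N * Module.finrank (ZMod p) ↥(T ⊓ T')) :=
  trace_RN_mul_RN_conjTranspose_general p N T T'
end

section
/- Let p be a prime and a, b, c, g : ℕ. Then trace((ρ_AB^{T_B})³) = p^(−2(a+b+c+g)), where ρ_AB^{T_B} is the partial transpose on B of the reduced density matrix on AB of the normalized state consisting of c Bell pairs between A and B, b Bell pairs between A and C, a Bell pairs between B and C, and g GHZ triples shared among A, B, C. -/
/-- Index type for subsystem `A`: `c` Bell-pair slots with `B`, `b` Bell-pair slots with `C`,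
`g` GHZ slots. -/
abbrev IA (p a b c g : ℕ) := (Fin c → ZMod p) × (Fin b → ZMod p) × (Fin g → ZMod p)

/-- Index type for subsystem `B`. -/
abbrev IB (p a b c g : ℕ) := (Fin c → ZMod p) × (Fin a → ZMod p) × (Fin g → ZMod p)

/-- Index type for subsystem `C`. -/
abbrev IC (p a b c g : ℕ) := (Fin b → ZMod p) × (Fin a → ZMod p) × (Fin g → ZMod p)

open Classical in
/-- The unnormalized state `(Φ⁺_AB)^{⊗c} ⊗ (Φ⁺_AC)^{⊗b} ⊗ (Φ⁺_BC)^{⊗a} ⊗ GHZ^{⊗g}` in the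
computational basis. -/
noncomputable def psiState (p a b c g : ℕ) :
    IA p a b c g × IB p a b c g × IC p a b c g → ℂ
  | ((u, v, w), (u', s, w'), (v', s', w'')) =>
      if u = u' ∧ v = v' ∧ s = s' ∧ w = w' ∧ w = w'' then 1 else 0

/-- The normalized tripartite density matrix `ρ`. -/
noncomputable def rhoState (p a b c g : ℕ) :
    Matrix (IA p a b c g × IB p a b c g × IC p a b c g)
      (IA p a b c g × IB p a b c g × IC p a b c g) ℂ :=
  fun X Y => ((p : ℂ) ^ (a + b + c + g))⁻¹ * psiState p a b c g X * psiState p a b c g Y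

/-- The reduced density matrix `ρ_AB` (partial trace over `C`). -/
noncomputable def rhoAB (p a b c g : ℕ) [NeZero p] :
    Matrix (IA p a b c g × IB p a b c g) (IA p a b c g × IB p a b c g) ℂ :=
  fun X Y => ∑ iC : IC p a b c g, rhoState p a b c g (X.1, X.2, iC) (Y.1, Y.2, iC)

/-- The partial transpose `ρ_AB^{T_B}` on subsystem `B`. -/
noncomputable def rhoTB (p a b c g : ℕ) [NeZero p] :
    Matrix (IA p a b c g × IB p a b c g) (IA p a b c g × IB p a b c g) ℂ :=
  fun X Y => rhoAB p a b c g (X.1, Y.2) (Y.1, X.2)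

/-!
Tracing out `C` leaves `ρ_AB = ν Σ_C |ψ_C⟩⟨ψ_C|` with `ν = p^-(a+b+c+g)`, and the partial transpose
on `B` turns this into `ν` times the matrix of a partial involution `f` of the computational basis:
`f` exchanges the `A`- and `B`-halves of the `AB` Bell pairs and is defined exactly where the GHZ
labels of `A` and `B` agree. A partial involution satisfies `f ∘ f ∘ f = f`, so
`tr ((ρ_AB^{T_B})³) = ν³ · #{fixed points of f}`, and the fixed points are determined by their
`A`-label and the `BC` Bell label of `B`, so there are `p^(a+b+c+g) = ν⁻¹` of them.
-/

open Finset

namespace PEquiv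

variable {α β : Type*}

theorem self_trans_symm_trans (f : α ≃. β) : (f.trans f.symm).trans f = f := by
  ext a b
  rw [self_trans_symm, trans_eq_some]
  constructor
  · rintro ⟨a', ha', hb⟩
    obtain ⟨rfl, -⟩ := ofSet_eq_some_iff.1 ha'
    exact hb
  · intro hb
    exact ⟨a, ofSet_eq_some_iff.2 ⟨rfl, by simp [hb]⟩, hb⟩

theorem toMatrix_mul_toMatrix_mul_toMatrix_of_symm_eq [Fintype α] [DecidableEq α]
    {R : Type*} [NonAssocSemiring R] {f : α ≃. α} (hf : f.symm = f) :
    (f.toMatrix * f.toMatrix * f.toMatrix : Matrix α α R) = f.toMatrix := by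
  conv_lhs => arg 1; arg 2; rw [← hf]
  rw [← toMatrix_trans, ← toMatrix_trans, self_trans_symm_trans]

theorem trace_toMatrix [Fintype α] [DecidableEq α] {R : Type*} [AddCommMonoidWithOne R]
    (f : α ≃. α) : (f.toMatrix : Matrix α α R).trace = #{a | a ∈ f a} := by
  simp only [Matrix.trace, Matrix.diag, toMatrix_apply, Finset.sum_boole]

def ofInvolutiveOn (σ : α → α) (hσ : Function.Involutive σ) (s : Set α) [DecidablePred (· ∈ s)]
    (hs : ∀ a ∈ s, σ a ∈ s) : α ≃. α where
  toFun a := if a ∈ s then some (σ a) else none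
  invFun a := if a ∈ s then some (σ a) else none
  inv a b := by
    split_ifs <;> grind [hs a, hs b, hσ a, hσ b]

theorem mem_ofInvolutiveOn_iff {σ : α → α} {hσ : Function.Involutive σ} {s : Set α}
    [DecidablePred (· ∈ s)] {hs : ∀ a ∈ s, σ a ∈ s} {a b : α} :
    b ∈ ofInvolutiveOn σ hσ s hs a ↔ a ∈ s ∧ σ a = b := by
  simp [ofInvolutiveOn]

end PEquiv

-- Instance search for `DecidableEq (IA p a b c g × IB p a b c g)` exceeds the default size limit.
open Classical

variable {p a b c g : ℕ}

theorem psiState_apply (A : IA p a b c g) (B : IB p a b c g) (C : IC p a b c g) :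
    psiState p a b c g (A, B, C) =
      if A.1 = B.1 ∧ A.2.2 = B.2.2 ∧ C = (A.2.1, B.2.1, A.2.2) then 1 else 0 := by
  obtain ⟨u, v, w⟩ := A
  obtain ⟨u', s, w'⟩ := B
  obtain ⟨v', s', w''⟩ := C
  simp only [psiState, Prod.mk.injEq]
  grind

theorem rhoAB_apply [NeZero p] (X Y : IA p a b c g × IB p a b c g) :
    rhoAB p a b c g X Y =
      if (X.1.1 = X.2.1 ∧ X.1.2.2 = X.2.2.2) ∧ (Y.1.1 = Y.2.1 ∧ Y.1.2.2 = Y.2.2.2) ∧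
          (X.1.2.1, X.2.2.1, X.1.2.2) = (Y.1.2.1, Y.2.2.1, Y.1.2.2)
        then ((p : ℂ) ^ (a + b + c + g))⁻¹ else 0 := by
  rw [rhoAB, Fintype.sum_eq_single (X.1.2.1, X.2.2.1, X.1.2.2)
    (fun C hC => by simp [rhoState, psiState_apply, hC])]
  simp only [rhoState, psiState_apply, mul_ite, mul_one, mul_zero]
  split_ifs <;> grind

variable (p a b c g)

noncomputable def partialBellSwap : (IA p a b c g × IB p a b c g) ≃. (IA p a b c g × IB p a b c g) :=
  PEquiv.ofInvolutiveOn (fun X => ((X.2.1, X.1.2), (X.1.1, X.2.2))) (fun _ => rfl)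
    {X | X.1.2.2 = X.2.2.2} (fun _ h => h)

variable {p a b c g}

theorem mem_partialBellSwap_iff {X Y : IA p a b c g × IB p a b c g} :
    Y ∈ partialBellSwap p a b c g X ↔ X.1.2.2 = X.2.2.2 ∧ ((X.2.1, X.1.2), (X.1.1, X.2.2)) = Y :=
  PEquiv.mem_ofInvolutiveOn_iff

theorem rhoTB_eq_smul_toMatrix [NeZero p] :
    rhoTB p a b c g = ((p : ℂ) ^ (a + b + c + g))⁻¹ • (partialBellSwap p a b c g).toMatrix := by
  ext ⟨⟨u, v, w⟩, ⟨u', s, w'⟩⟩ ⟨⟨tu, tv, tw⟩, ⟨tu', ts, tw'⟩⟩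
  simp only [rhoTB, rhoAB_apply, Matrix.smul_apply, PEquiv.toMatrix_apply,
    mem_partialBellSwap_iff, Prod.mk.injEq, smul_eq_mul]
  grind

theorem mem_partialBellSwap_self_iff {X : IA p a b c g × IB p a b c g} :
    X ∈ partialBellSwap p a b c g X ↔ X.1.2.2 = X.2.2.2 ∧ X.1.1 = X.2.1 := by
  rw [mem_partialBellSwap_iff]
  grind

def fixedPointsPartialBellSwapEquiv :
    {X : IA p a b c g × IB p a b c g // X.1.2.2 = X.2.2.2 ∧ X.1.1 = X.2.1} ≃
      IA p a b c g × (Fin a → ZMod p) where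
  toFun X := (X.1.1, X.1.2.2.1)
  invFun Y := ⟨(Y.1, (Y.1.1, Y.2, Y.1.2.2)), rfl, rfl⟩
  left_inv := by
    rintro ⟨⟨⟨u, v, w⟩, ⟨u', s, w'⟩⟩, hw, hu⟩
    obtain rfl : w = w' := hw
    obtain rfl : u = u' := hu
    rfl
  right_inv _ := rfl

theorem card_fixedPoints_partialBellSwap [NeZero p] :
    #{X | X ∈ partialBellSwap p a b c g X} = p ^ (a + b + c + g) := by
  rw [filter_congr fun X _ => mem_partialBellSwap_self_iff, ← Fintype.card_subtype,
    Fintype.card_congr fixedPointsPartialBellSwapEquiv]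
  simp only [Fintype.card_prod, Fintype.card_pi, ZMod.card, prod_const, card_univ, Fintype.card_fin]
  ring

open Classical in
theorem trace_partial_transpose_cube_general (p : ℕ) [NeZero p] (a b c g : ℕ) :
    Matrix.trace (rhoTB p a b c g * rhoTB p a b c g * rhoTB p a b c g) = (p : ℂ) ^ (-(2 * (a + b + c + g) : ℤ)) := by
  have hq : (p : ℂ) ^ (a + b + c + g) ≠ 0 := pow_ne_zero _ (Nat.cast_ne_zero.2 (NeZero.ne p))
  rw [rhoTB_eq_smul_toMatrix, smul_mul_smul, smul_mul_smul,
    PEquiv.toMatrix_mul_toMatrix_mul_toMatrix_of_symm_eq rfl, Matrix.trace_smul,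
    PEquiv.trace_toMatrix, card_fixedPoints_partialBellSwap,
    show (-(2 * (a + b + c + g) : ℤ)) = ((a + b + c + g : ℕ) : ℤ) * (-2) by push_cast; ring,
    zpow_mul, zpow_natCast, smul_eq_mul, Nat.cast_pow]
  field_simp

open Classical in
/-- `tr ((ρ_AB^{T_B})³) = p^{-2(a+b+c+g)}`. -/
theorem trace_partial_transpose_cube (p : ℕ) (hp : p.Prime) [NeZero p] (a b c g : ℕ) :
    Matrix.trace (rhoTB p a b c g * rhoTB p a b c g * rhoTB p a b c g) = (p : ℂ) ^ (-(2 * (a + b + c + g) : ℤ)) :=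
  trace_partial_transpose_cube_general p a b c g
end

section
/- Let V and E be finite types and ends : E → V × V a finite multigraph. For any two finsets X, Y ⊆ V, |∂X| + |∂Y| ≥ |∂(X \ Y)| + |∂(Y \ X)|. -/
/-! The boundaries of `X \ Y` and `Y \ X` together cover every edge at most as often as those
of `X` and `Y` do: an edge in either of them lies in `∂X ∪ ∂Y`, and an edge in both joins
`X \ Y` to `Y \ X`, so it lies in `∂X ∩ ∂Y`. Counting with `|A| + |B| = |A ∪ B| + |A ∩ B|`
gives the inequality. -/

open Classical in
/-- The edge boundary `∂W` of a finset of vertices `W` in a finite multigraph given by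
`ends : E → V × V`: the edges with exactly one endpoint in `W`. -/
noncomputable def edgeBoundary {V E : Type*} [Fintype V] [Fintype E]
    (ends : E → V × V) (W : Finset V) : Finset E :=
  Finset.univ.filter fun e =>
    ((ends e).1 ∈ W ∧ (ends e).2 ∉ W) ∨ ((ends e).1 ∉ W ∧ (ends e).2 ∈ W)

theorem Finset.card_add_card_le_of_union_subset_of_inter_subset {α : Type*} [DecidableEq α]
    {A B C D : Finset α} (hunion : A ∪ B ⊆ C ∪ D) (hinter : A ∩ B ⊆ C ∩ D) :
    A.card + B.card ≤ C.card + D.card := by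
  rw [← Finset.card_union_add_card_inter, ← Finset.card_union_add_card_inter C]
  exact add_le_add (Finset.card_le_card hunion) (Finset.card_le_card hinter)

section EdgeBoundary

variable {V E : Type*} [Fintype V] [Fintype E] (ends : E → V × V)

theorem mem_edgeBoundary {W : Finset V} {e : E} :
    e ∈ edgeBoundary ends W ↔
      ((ends e).1 ∈ W ∧ (ends e).2 ∉ W) ∨ ((ends e).1 ∉ W ∧ (ends e).2 ∈ W) := by
  simp [edgeBoundary]

variable [DecidableEq V] [DecidableEq E] (X Y : Finset V)

theorem edgeBoundary_sdiff_union_subset :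
    edgeBoundary ends (X \ Y) ∪ edgeBoundary ends (Y \ X) ⊆
      edgeBoundary ends X ∪ edgeBoundary ends Y := by
  intro e
  simp only [Finset.mem_union, mem_edgeBoundary, Finset.mem_sdiff]
  tauto

theorem edgeBoundary_sdiff_inter_subset :
    edgeBoundary ends (X \ Y) ∩ edgeBoundary ends (Y \ X) ⊆
      edgeBoundary ends X ∩ edgeBoundary ends Y := by
  intro e
  simp only [Finset.mem_inter, mem_edgeBoundary, Finset.mem_sdiff]
  tauto

end EdgeBoundary

/-- Submodularity-type inequality for the edge boundary:
`|∂X| + |∂Y| ≥ |∂(X \ Y)| + |∂(Y \ X)|`. -/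
theorem edgeBoundary_card_sdiff_le {V E : Type*} [Fintype V] [Fintype E] [DecidableEq V]
    (ends : E → V × V) (X Y : Finset V) :
    (edgeBoundary ends (X \ Y)).card + (edgeBoundary ends (Y \ X)).card ≤
      (edgeBoundary ends X).card + (edgeBoundary ends Y).card := by
  classical
  exact Finset.card_add_card_le_of_union_subset_of_inter_subset
    (edgeBoundary_sdiff_union_subset ends X Y) (edgeBoundary_sdiff_inter_subset ends X Y)
end

section
/- Let (V, E, ends) be a finite multigraph with boundary vertices V_∂ ⊆ V, and let A, B ⊆ V_∂ be disjoint. Let V_A be a minimal cut for A, let V_B be a minimal cut for B, and set V₀ = V_A ∩ V_B. Then V_A \ V₀ is a minimal cut for A, or V_B \ V₀ is a minimal cut for B. -/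
/-- `W` is a cut for the boundary subset `X ⊆ V_∂` if `W ∩ V_∂ = X`. -/
def IsCut {V : Type*} [DecidableEq V] (Vbd : Finset V) (X W : Finset V) : Prop :=
  W ∩ Vbd = X

/-- `W` is a minimal cut for `X` if it is a cut for `X` minimizing `|∂W|`. -/
def IsMinCut {V E : Type*} [Fintype V] [Fintype E] [DecidableEq V]
    (ends : E → V × V) (Vbd : Finset V) (X W : Finset V) : Prop :=
  IsCut Vbd X W ∧ ∀ W', IsCut Vbd X W' →
    (edgeBoundary ends W).card ≤ (edgeBoundary ends W').card

/-!
The edge-boundary function is posimodular: `|∂(X \ Y)| + |∂(Y \ X)| ≤ |∂X| + |∂Y|`, as one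
checks edge by edge. For disjoint `A`, `B`, the sets `V_A \ V_B` and `V_B \ V_A` are again cuts
for `A` and `B`, so minimality of `V_A` and `V_B` forces equality in both terms: both differences
are minimal cuts, and `V_A \ V₀ = V_A \ V_B`.
-/

section

open Finset

variable {V E : Type*} [DecidableEq V]

lemma IsCut.sdiff {Vbd X Y W W' : Finset V} (hW : IsCut Vbd X W) (hW' : IsCut Vbd Y W')
    (hXY : Disjoint X Y) : IsCut Vbd X (W \ W') := by
  calc W \ W' ∩ Vbd = (W ∩ Vbd) \ (W' ∩ Vbd) := inf_sdiff_distrib_right W W' Vbd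
    _ = X := by rw [hW, hW', sdiff_eq_self_of_disjoint hXY]

variable [Fintype V] [Fintype E]

lemma card_edgeBoundary_sdiff_add_card_edgeBoundary_sdiff_le (ends : E → V × V) (X Y : Finset V) :
    #(edgeBoundary ends (X \ Y)) + #(edgeBoundary ends (Y \ X)) ≤
      #(edgeBoundary ends X) + #(edgeBoundary ends Y) := by
  simp only [edgeBoundary, card_filter, ← sum_add_distrib]
  refine sum_le_sum fun e _ => ?_
  by_cases h1 : (ends e).1 ∈ X <;> by_cases h2 : (ends e).2 ∈ X <;>
    by_cases h3 : (ends e).1 ∈ Y <;> by_cases h4 : (ends e).2 ∈ Y <;>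
    simp [h1, h2, h3, h4]

lemma IsMinCut.sdiff_of_disjoint {ends : E → V × V} {Vbd A B VA VB : Finset V}
    (hVA : IsMinCut ends Vbd A VA) (hVB : IsMinCut ends Vbd B VB) (hAB : Disjoint A B) :
    IsMinCut ends Vbd A (VA \ VB) ∧ IsMinCut ends Vbd B (VB \ VA) := by
  have hcutA := hVA.1.sdiff hVB.1 hAB
  have hcutB := hVB.1.sdiff hVA.1 hAB.symm
  have hposi := card_edgeBoundary_sdiff_add_card_edgeBoundary_sdiff_le ends VA VB
  have hleA := hVA.2 _ hcutA
  have hleB := hVB.2 _ hcutB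
  exact ⟨⟨hcutA, fun W hW => (hVA.2 W hW).trans' (by omega)⟩,
    ⟨hcutB, fun W hW => (hVB.2 W hW).trans' (by omega)⟩⟩

end

theorem minCut_sdiff_of_disjoint_general {V E : Type*} [Fintype V] [Fintype E] [DecidableEq V]
    (ends : E → V × V) (Vbd : Finset V) (A B : Finset V)
    (hAB : Disjoint A B)
    (VA VB : Finset V) (hVA : IsMinCut ends Vbd A VA) (hVB : IsMinCut ends Vbd B VB) :
    IsMinCut ends Vbd A (VA \ (VA ∩ VB)) ∨ IsMinCut ends Vbd B (VB \ (VA ∩ VB)) := by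
  rw [Finset.sdiff_inter_self_left]
  exact Or.inl (hVA.sdiff_of_disjoint hVB hAB).1

/-- If `V_A`, `V_B` are minimal cuts for disjoint boundary regions `A`, `B`, and
`V₀ = V_A ∩ V_B`, then `V_A \ V₀` is a minimal cut for `A` or `V_B \ V₀` is a minimal
cut for `B`. -/
theorem minCut_sdiff_of_disjoint {V E : Type*} [Fintype V] [Fintype E] [DecidableEq V]
    (ends : E → V × V) (Vbd : Finset V) (A B : Finset V)
    (hA : A ⊆ Vbd) (hB : B ⊆ Vbd) (hAB : Disjoint A B)
    (VA VB : Finset V) (hVA : IsMinCut ends Vbd A VA) (hVB : IsMinCut ends Vbd B VB) :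
    IsMinCut ends Vbd A (VA \ (VA ∩ VB)) ∨ IsMinCut ends Vbd B (VB \ (VA ∩ VB)) :=
  minCut_sdiff_of_disjoint_general ends Vbd A B hAB VA VB hVA hVB
end
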